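/- The class 𝓙 is closed under convolution roots: if the n-fold convolution F^{n*} belongs to 𝓙 for some n ≥ 2, then F̄ ≍ F̄^{n*} and F ∈ 𝓙. -/

import Mathlib

open MeasureTheory Filter Set

/-- Tail of a distribution: `F̄(x) = μ(x, ∞)`. -/
noncomputable def tail (μ : Measure ℝ) (x : ℝ) : ℝ := (μ (Set.Ioi x)).toReal

/-- Conditional probability `P(A | X₁ + X₂ > x)` for two i.i.d. variables with law `μ`. -/
noncomputable def condPair (μ : Measure ℝ) (A : Set (ℝ × ℝ)) (x : ℝ) : ℝ :=
  ((μ.prod μ) (A ∩ {p | x < p.1 + p.2})).toReal / ((μ.prod μ) {p | x < p.1 + p.2}).toReal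

/-- The class 𝓙 : `lim_{K→∞} liminf_{x→∞} P(max(X₁,X₂) > x − K | X₁ + X₂ > x) = 1`. -/
def MemJ (μ : Measure ℝ) : Prop :=
  Tendsto (fun K : ℝ =>
      liminf (fun x : ℝ => condPair μ {p | x - K < max p.1 p.2} x) atTop)
    atTop (nhds 1)

/-- The class 𝓙 (equivalent form): for every nonnegative, unbounded, nondecreasing `g`,
`lim_{x→∞} P(min(X₁,X₂) > g(x) | X₁ + X₂ > x) = 0`. -/
def MemJg (μ : Measure ℝ) : Prop :=
  ∀ g : ℝ → ℝ, (∀ x, 0 ≤ g x) → Monotone g → (∀ M, ∃ x, M < g x) →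
    Tendsto (fun x : ℝ => condPair μ {p | g x < min p.1 p.2} x) atTop (nhds 0)

/-- Tail of the two-fold convolution: `F̄²*(x) = P(X₁ + X₂ > x)`. -/
noncomputable def tail2 (μ : Measure ℝ) (x : ℝ) : ℝ := ((μ.prod μ) {p | x < p.1 + p.2}).toReal

/-- Weak asymptotic tail-equivalence `F̄ ≍ Ḡ`:
`0 < liminf F̄(x)/Ḡ(x) ≤ limsup F̄(x)/Ḡ(x) < ∞`. -/
def WeakTailEquiv (μ ν : Measure ℝ) : Prop :=
  (∃ c : ℝ, 0 < c ∧ ∀ᶠ x in atTop, c * tail ν x ≤ tail μ x) ∧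
  (∃ C : ℝ, ∀ᶠ x in atTop, tail μ x ≤ C * tail ν x)

/-- Convolution of two laws on ℝ. -/
noncomputable def conv (μ ν : Measure ℝ) : Measure ℝ :=
  Measure.map (fun p : ℝ × ℝ => p.1 + p.2) (μ.prod ν)

/-- `n`-fold convolution `F^{n*}`. -/
noncomputable def nconv (μ : Measure ℝ) : ℕ → Measure ℝ
  | 0 => Measure.dirac 0
  | n + 1 => conv (nconv μ n) μ

open scoped Topology

/-!
Write `H = F^{n*}`. As `F` lives on `[0, ∞)`, `F̄ ≤ H̄`. Membership `H ∈ 𝓙` makes `H̄^{2*}(x)` at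
most `4 H̄(x - K₀)`; with the rectangle bound `H̄(x - a) H̄(a) ≤ H̄^{2*}(x)` this makes `H` O-long-tailed
with `H̄^{2*} ≍ H̄`, and it makes the event that both summands are large,
`{Y₁ > s, Y₂ > u, Y₁ + Y₂ > x}`, negligible against `H̄^{2*}(x)` uniformly in `s, u ≥ t₀`.

Splitting `X₁ + ⋯ + X_n > x` according to whether one summand exceeds `x - (n - 1) t` gives
`H̄(x) ≤ n F̄(x - (n - 1) t) + n P_H(two large summands)`, so `H̄(x) ≤ 2n F̄(x - (n - 1) t)` and, by
O-long-tailedness, `F̄ ≍ H̄`. Finally, if `X₁ + X₂ > x` while both `Xᵢ ≤ x - K`, one summand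
exceeds `x / 2` and the other `K`; since `F̄ ≤ H̄`, this event is dominated by the same event for
`H`, hence is `o(H̄^{2*}(x)) = o(F̄^{2*}(x))`, which is `F ∈ 𝓙`.
-/

lemma nconv_succ (μ : Measure ℝ) (k : ℕ) : nconv μ (k + 1) = nconv μ k ∗ μ := rfl

lemma nconv_one (μ : Measure ℝ) [SFinite μ] : nconv μ 1 = μ :=
  Measure.dirac_zero_conv μ

instance (μ : Measure ℝ) [IsProbabilityMeasure μ] (k : ℕ) :
    IsProbabilityMeasure (nconv μ k) := by
  induction k with
  | zero => exact Measure.dirac.isProbabilityMeasure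
  | succ k _ => rw [nconv_succ]; infer_instance

lemma measurePreserving_fst_add_snd (α β : Measure ℝ) :
    MeasurePreserving (fun p : ℝ × ℝ => p.1 + p.2) (α.prod β) (α ∗ β) :=
  ⟨by fun_prop, rfl⟩

def TailLE (μ ν : Measure ℝ) : Prop := ∀ y : ℝ, μ (Ioi y) ≤ ν (Ioi y)

lemma TailLE.refl (μ : Measure ℝ) : TailLE μ μ := fun _ => le_rfl

lemma TailLE.trans {μ ν ρ : Measure ℝ} (h₁ : TailLE μ ν) (h₂ : TailLE ν ρ) : TailLE μ ρ :=
  fun y => (h₁ y).trans (h₂ y)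

lemma tailLE_conv_right (μ : Measure ℝ) {ν : Measure ℝ} [IsFiniteMeasure μ]
    [IsProbabilityMeasure ν] (hν : ν (Iio 0) = 0) : TailLE μ (μ ∗ ν) := by
  intro y
  have hν₀ : ν (Ici 0) = 1 := by
    rw [← compl_Iio, prob_compl_eq_one_sub measurableSet_Iio, hν, tsub_zero]
  calc μ (Ioi y) = (μ.prod ν) (Ioi y ×ˢ Ici 0) := by rw [Measure.prod_prod, hν₀, mul_one]
    _ ≤ (μ.prod ν) ((fun p : ℝ × ℝ => p.1 + p.2) ⁻¹' Ioi y) :=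
        measure_mono fun p ⟨h₁, h₂⟩ => by simp only [mem_Ioi, mem_Ici, mem_preimage] at *; linarith
    _ = (μ ∗ ν) (Ioi y) := (measurePreserving_fst_add_snd μ ν).measure_preimage
        measurableSet_Ioi.nullMeasurableSet

lemma tailLE_nconv (μ : Measure ℝ) [IsProbabilityMeasure μ] (hnn : μ (Iio 0) = 0)
    {k : ℕ} (hk : 1 ≤ k) : TailLE μ (nconv μ k) := by
  induction k, hk using Nat.le_induction with
  | base => rw [nconv_one]; exact TailLE.refl μ
  | succ k _ ih => exact ih.trans (tailLE_conv_right _ hnn)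

lemma tail2_eq_tail_conv (ν : Measure ℝ) (x : ℝ) : tail2 ν x = tail (ν ∗ ν) x :=
  congrArg ENNReal.toReal
    ((measurePreserving_fst_add_snd ν ν).measure_preimage measurableSet_Ioi.nullMeasurableSet)

lemma tail_antitone (ν : Measure ℝ) [IsFiniteMeasure ν] : Antitone (tail ν) :=
  fun _ _ h => measureReal_mono (Ioi_subset_Ioi h)

lemma tendsto_tail_atTop (ν : Measure ℝ) [IsProbabilityMeasure ν] :
    Tendsto (tail ν) atTop (𝓝 0) := by
  have h : ∀ x, tail ν x = 1 - ProbabilityTheory.cdf ν x := fun x => by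
    rw [ProbabilityTheory.cdf_eq_real, tail, ← compl_Iic, ← measureReal_def,
      measureReal_compl measurableSet_Iic, probReal_univ]
  simpa [funext h] using (ProbabilityTheory.tendsto_cdf_atTop ν).const_sub 1

lemma tail_mul_tail_le_tail2 (ν : Measure ℝ) [IsFiniteMeasure ν] (x a : ℝ) :
    tail ν (x - a) * tail ν a ≤ tail2 ν x := by
  rw [tail, tail, ← measureReal_def, ← measureReal_def, ← measureReal_prod_prod]
  exact measureReal_mono fun p ⟨h₁, h₂⟩ => by simp only [mem_Ioi, mem_ofPred_eq] at *; linarith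

lemma tail2_pos (ν : Measure ℝ) [IsFiniteMeasure ν] (htail : ∀ x, 0 < tail ν x) (x : ℝ) :
    0 < tail2 ν x :=
  (mul_pos (htail _) (htail 0)).trans_le (sub_zero x ▸ tail_mul_tail_le_tail2 ν x 0)

lemma tail_le_tail2 (ν : Measure ℝ) [IsProbabilityMeasure ν] (hnn : ν (Iio 0) = 0) (x : ℝ) :
    tail ν x ≤ tail2 ν x := by
  rw [tail2_eq_tail_conv]
  exact ENNReal.toReal_mono (measure_ne_top _ _) (tailLE_conv_right ν hnn x)

lemma TailLE.tail_le {μ ν : Measure ℝ} [IsFiniteMeasure ν] (h : TailLE μ ν) (x : ℝ) :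
    tail μ x ≤ tail ν x :=
  ENNReal.toReal_mono (measure_ne_top _ _) (h x)

lemma measureReal_le_add_add_of_subset {α : Type*} [MeasurableSpace α] {μ : Measure α}
    [IsFiniteMeasure μ] {s a b c : Set α} (h : s ⊆ a ∪ b ∪ c) :
    μ.real s ≤ μ.real a + μ.real b + μ.real c :=
  (measureReal_mono h).trans <|
    (measureReal_union_le _ _).trans (add_le_add_left (measureReal_union_le _ _) _)

def noBigJumpSet (K x : ℝ) : Set (ℝ × ℝ) := {p | x < p.1 + p.2 ∧ p.1 ≤ x - K ∧ p.2 ≤ x - K}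

def bothLargeSet (s u x : ℝ) : Set (ℝ × ℝ) := {p | s < p.1 ∧ u < p.2 ∧ x < p.1 + p.2}

lemma measurableSet_noBigJumpSet (K x : ℝ) : MeasurableSet (noBigJumpSet K x) := by
  unfold noBigJumpSet; measurability

lemma measurableSet_bothLargeSet (s u x : ℝ) : MeasurableSet (bothLargeSet s u x) := by
  unfold bothLargeSet; measurability

lemma TailLE.prod_setOf_le_right {σ τ G : Measure ℝ} [SFinite τ] [SFinite G] (h : TailLE τ G)
    {A : Set ℝ} (hA : MeasurableSet A) {f : ℝ → ℝ} (hf : Measurable f) :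
    (σ.prod τ) {p | p.1 ∈ A ∧ f p.1 < p.2} ≤ (σ.prod G) {p | p.1 ∈ A ∧ f p.1 < p.2} := by
  have hm : MeasurableSet {p : ℝ × ℝ | p.1 ∈ A ∧ f p.1 < p.2} :=
    (measurable_fst hA).inter (measurableSet_lt (hf.comp measurable_fst) measurable_snd)
  rw [Measure.prod_apply hm, Measure.prod_apply hm]
  refine lintegral_mono fun a => ?_
  by_cases ha : a ∈ A
  · have hsec : Prod.mk a ⁻¹' {p : ℝ × ℝ | p.1 ∈ A ∧ f p.1 < p.2} = Ioi (f a) := by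
      ext b; simp [ha]
    rw [hsec]
    exact h _
  · have hsec : Prod.mk a ⁻¹' {p : ℝ × ℝ | p.1 ∈ A ∧ f p.1 < p.2} = ∅ := by
      ext b; simp [ha]
    simp [hsec]

lemma TailLE.prod_setOf_le_left {σ τ G : Measure ℝ} [SFinite σ] [SFinite τ] [SFinite G]
    (h : TailLE σ G) {A : Set ℝ} (hA : MeasurableSet A) {f : ℝ → ℝ} (hf : Measurable f) :
    (σ.prod τ) {p | p.2 ∈ A ∧ f p.2 < p.1} ≤ (G.prod τ) {p | p.2 ∈ A ∧ f p.2 < p.1} := by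
  have hm : MeasurableSet {p : ℝ × ℝ | p.1 ∈ A ∧ f p.1 < p.2} :=
    (measurable_fst hA).inter (measurableSet_lt (hf.comp measurable_fst) measurable_snd)
  have hswap : ∀ ρ : Measure ℝ, [SFinite ρ] → (ρ.prod τ) {p | p.2 ∈ A ∧ f p.2 < p.1}
      = (τ.prod ρ) {p | p.1 ∈ A ∧ f p.1 < p.2} := fun ρ _ =>
    (Measure.measurePreserving_swap : MeasurePreserving Prod.swap (ρ.prod τ) (τ.prod ρ))
      |>.measure_preimage hm.nullMeasurableSet
  rw [hswap σ, hswap G]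
  exact h.prod_setOf_le_right hA hf

lemma prod_bothLargeSet_le_of_tailLE {σ τ G G' : Measure ℝ} [SFinite σ] [SFinite τ] [SFinite G]
    [SFinite G'] (hσ : TailLE σ G) (hτ : TailLE τ G') (s u x : ℝ) :
    (σ.prod τ) (bothLargeSet s u x) ≤ (G.prod G') (bothLargeSet s u x) := by
  have h₁ : bothLargeSet s u x = {p | p.1 ∈ Ioi s ∧ max u (x - p.1) < p.2} := by
    ext p; simp only [bothLargeSet, mem_Ioi, max_lt_iff, mem_ofPred_eq, sub_lt_iff_lt_add']
  have h₂ : bothLargeSet s u x = {p | p.2 ∈ Ioi u ∧ max s (x - p.2) < p.1} := by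
    ext p; simp only [bothLargeSet, mem_Ioi, max_lt_iff, mem_ofPred_eq, sub_lt_iff_lt_add]
    tauto
  calc (σ.prod τ) (bothLargeSet s u x) ≤ (σ.prod G') (bothLargeSet s u x) := by
        rw [h₁]
        exact hτ.prod_setOf_le_right (f := fun a => max u (x - a)) measurableSet_Ioi (by fun_prop)
    _ ≤ (G.prod G') (bothLargeSet s u x) := by
        rw [h₂]
        exact hσ.prod_setOf_le_left (f := fun b => max s (x - b)) measurableSet_Ioi (by fun_prop)

lemma condPair_nonneg (ν : Measure ℝ) (A : Set (ℝ × ℝ)) (x : ℝ) : 0 ≤ condPair ν A x :=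
  div_nonneg ENNReal.toReal_nonneg ENNReal.toReal_nonneg

section CondPair

variable {ν : Measure ℝ} [IsFiniteMeasure ν]

lemma condPair_le_one (A : Set (ℝ × ℝ)) (x : ℝ) : condPair ν A x ≤ 1 :=
  div_le_one_of_le₀ (measureReal_mono inter_subset_right) ENNReal.toReal_nonneg

lemma condPair_max_eq (K x : ℝ) (hx : tail2 ν x ≠ 0) :
    condPair ν {p | x - K < max p.1 p.2} x
      = 1 - (ν.prod ν).real (noBigJumpSet K x) / tail2 ν x := by
  have hdiff : {p : ℝ × ℝ | x - K < max p.1 p.2} ∩ {p | x < p.1 + p.2}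
      = {p | x < p.1 + p.2} \ noBigJumpSet K x := by
    ext p
    simp only [noBigJumpSet, mem_inter_iff, Set.mem_sdiff, mem_ofPred_eq, lt_max_iff]
    constructor
    · rintro ⟨h₁, h₂⟩; exact ⟨h₂, fun ⟨_, h₃, h₄⟩ => by rcases h₁ with h₁ | h₁ <;> linarith⟩
    · rintro ⟨h₂, h₁⟩; refine ⟨?_, h₂⟩; by_contra! h; exact h₁ ⟨h₂, h.1, h.2⟩
  rw [condPair, ← measureReal_def, ← measureReal_def, hdiff,
    measureReal_sdiff (s₁ := {p : ℝ × ℝ | x < p.1 + p.2}) (fun p hp => hp.1)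
      (measurableSet_noBigJumpSet K x)]
  have hT : (ν.prod ν).real {p : ℝ × ℝ | x < p.1 + p.2} = tail2 ν x := rfl
  rw [hT, sub_div, div_self hx]

lemma memJ_iff (htail2 : ∀ x, 0 < tail2 ν x) :
    MemJ ν ↔ ∀ ε > 0, ∀ᶠ K in atTop, ∀ᶠ x in atTop,
      (ν.prod ν).real (noBigJumpSet K x) ≤ ε * tail2 ν x := by
  set P := fun K x : ℝ => condPair ν {p | x - K < max p.1 p.2} x
  have hbddBelow : ∀ K, IsBoundedUnder (· ≥ ·) atTop (P K) := fun K =>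
    isBoundedUnder_of_eventually_ge (Eventually.of_forall fun x => condPair_nonneg ν _ x)
  have hbddAbove : ∀ K, IsBoundedUnder (· ≤ ·) atTop (P K) := fun K =>
    isBoundedUnder_of_eventually_le (Eventually.of_forall fun x => condPair_le_one _ x)
  have key : ∀ K x ε, (ν.prod ν).real (noBigJumpSet K x) ≤ ε * tail2 ν x ↔ 1 - ε ≤ P K x :=
    fun K x ε => by
      simp only [P]
      rw [condPair_max_eq K x (htail2 x).ne', sub_le_sub_iff_left, div_le_iff₀ (htail2 x)]
  constructor
  · intro hJ ε hε
    filter_upwards [hJ.eventually (lt_mem_nhds (sub_lt_self 1 hε))] with K hK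
    filter_upwards [eventually_lt_of_lt_liminf hK (hbddBelow K)] with x hx
    exact (key K x ε).2 hx.le
  · intro h
    refine tendsto_order.2 ⟨fun a ha => ?_, fun a ha => Eventually.of_forall fun K =>
      (liminf_le_of_frequently_le (Eventually.of_forall fun x => condPair_le_one _ x).frequently
        (hbddBelow K)).trans_lt ha⟩
    filter_upwards [h ((1 - a) / 2) (by linarith)] with K hK
    calc a < 1 - (1 - a) / 2 := by linarith
      _ ≤ liminf (P K) atTop :=
        le_liminf_of_le (hbddAbove K).isCoboundedUnder_ge (hK.mono fun x hx => (key K x _).1 hx)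

end CondPair

section MemJ

variable {ν : Measure ℝ} [IsProbabilityMeasure ν]

lemma MemJ.exists_tail2_le_tail_sub (hJ : MemJ ν) (htail : ∀ x, 0 < tail ν x) :
    ∃ K₀, ∀ᶠ x in atTop, tail2 ν x ≤ 4 * tail ν (x - K₀) := by
  obtain ⟨K₀, hK₀⟩ := ((memJ_iff (tail2_pos ν htail)).1 hJ (1 / 2) (by norm_num)).exists
  refine ⟨K₀, hK₀.mono fun x hx => ?_⟩
  have hcover : {p : ℝ × ℝ | x < p.1 + p.2}
      ⊆ noBigJumpSet K₀ x ∪ Ioi (x - K₀) ×ˢ univ ∪ univ ×ˢ Ioi (x - K₀) := by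
    rintro ⟨a, b⟩ hab
    by_cases ha : x - K₀ < a
    · exact Or.inl (Or.inr ⟨ha, trivial⟩)
    by_cases hb : x - K₀ < b
    · exact Or.inr ⟨trivial, hb⟩
    exact Or.inl (Or.inl ⟨hab, not_lt.1 ha, not_lt.1 hb⟩)
  have h := measureReal_le_add_add_of_subset (μ := ν.prod ν) hcover
  rw [measureReal_prod_prod, measureReal_prod_prod, probReal_univ] at h
  change tail2 ν x ≤ _ + tail ν (x - K₀) * 1 + 1 * tail ν (x - K₀) at h
  linarith

lemma MemJ.tail_sub_le (hJ : MemJ ν) (htail : ∀ x, 0 < tail ν x) (s : ℝ) :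
    ∃ D > 0, ∀ᶠ x in atTop, tail ν (x - s) ≤ D * tail ν x := by
  obtain ⟨K₀, hK₀⟩ := hJ.exists_tail2_le_tail_sub htail
  refine ⟨4 / tail ν (s + K₀), div_pos four_pos (htail _), ?_⟩
  filter_upwards [(tendsto_atTop_add_const_right _ K₀ tendsto_id).eventually hK₀] with x hx
  have hrect := tail_mul_tail_le_tail2 ν (x + K₀) (s + K₀)
  rw [show x + K₀ - (s + K₀) = x - s by ring] at hrect
  rw [id, add_sub_cancel_right] at hx
  rw [div_mul_eq_mul_div, le_div_iff₀ (htail _)]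
  linarith

lemma MemJ.tail2_le_mul_tail (hJ : MemJ ν) (htail : ∀ x, 0 < tail ν x) :
    ∃ C > 0, ∀ᶠ x in atTop, tail2 ν x ≤ C * tail ν x := by
  obtain ⟨K₀, hK₀⟩ := hJ.exists_tail2_le_tail_sub htail
  obtain ⟨D, hD, hDx⟩ := hJ.tail_sub_le htail K₀
  refine ⟨4 * D, by positivity, ?_⟩
  filter_upwards [hK₀, hDx] with x h₁ h₂
  linarith

lemma MemJ.exists_bothLargeSet_le (hJ : MemJ ν) (htail : ∀ x, 0 < tail ν x) {ε : ℝ}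
    (hε : 0 < ε) : ∃ t₀, ∀ᶠ x in atTop, ∀ s u, t₀ ≤ s → t₀ ≤ u →
      (ν.prod ν).real (bothLargeSet s u x) ≤ ε * tail2 ν x := by
  obtain ⟨K, hK⟩ := ((memJ_iff (tail2_pos ν htail)).1 hJ (ε / 3) (by positivity)).exists
  have hεK : 0 < ε / 3 * tail ν K := mul_pos (by positivity) (htail K)
  obtain ⟨t₀, ht₀⟩ :=
    eventually_atTop.1 ((tendsto_tail_atTop ν).eventually (eventually_le_nhds hεK))
  refine ⟨t₀, hK.mono fun x hx s u hs hu => ?_⟩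
  have hcover : bothLargeSet s u x
      ⊆ noBigJumpSet K x ∪ Ioi (x - K) ×ˢ Ioi u ∪ Ioi s ×ˢ Ioi (x - K) := by
    rintro ⟨a, b⟩ ⟨ha, hb, hab⟩
    by_cases ha' : x - K < a
    · exact Or.inl (Or.inr ⟨ha', hb⟩)
    by_cases hb' : x - K < b
    · exact Or.inr ⟨ha, hb'⟩
    exact Or.inl (Or.inl ⟨hab, not_lt.1 ha', not_lt.1 hb'⟩)
  have h := measureReal_le_add_add_of_subset (μ := ν.prod ν) hcover
  rw [measureReal_prod_prod, measureReal_prod_prod] at h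
  change _ ≤ _ + tail ν (x - K) * tail ν u + tail ν s * tail ν (x - K) at h
  -- the rectangle bound turns `tail ν u ≤ ε / 3 * tail ν K` into
  -- `tail ν (x - K) * tail ν u ≤ ε / 3 * tail2 ν x`, and likewise for `s`
  have hrect := tail_mul_tail_le_tail2 ν x K
  have hxK := (htail (x - K)).le
  nlinarith [ht₀ u hu, ht₀ s hs]

end MemJ

section Decomposition

variable (α β γ : Measure ℝ) [SFinite α] [SFinite β] [SFinite γ]

lemma measurePreserving_add₁₂ :
    MeasurePreserving (fun q : (ℝ × ℝ) × ℝ => (q.1.1 + q.1.2, q.2))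
      ((α.prod β).prod γ) ((α ∗ β).prod γ) :=
  (measurePreserving_fst_add_snd α β).prod (MeasurePreserving.id γ)

lemma measurePreserving_add₂₃ :
    MeasurePreserving (fun q : (ℝ × ℝ) × ℝ => (q.1.1, q.1.2 + q.2))
      ((α.prod β).prod γ) (α.prod (β ∗ γ)) :=
  ((MeasurePreserving.id α).prod (measurePreserving_fst_add_snd β γ)).comp
    (measurePreserving_prodAssoc α β γ)

lemma measurePreserving_add₁₃ :
    MeasurePreserving (fun q : (ℝ × ℝ) × ℝ => (q.1.1 + q.2, q.1.2))
      ((α.prod β).prod γ) ((α ∗ γ).prod β) :=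
  ((measurePreserving_fst_add_snd α γ).prod (MeasurePreserving.id β)).comp <|
    (measurePreserving_prodAssoc α γ β).symm.comp <|
      ((MeasurePreserving.id α).prod Measure.measurePreserving_swap).comp
        (measurePreserving_prodAssoc α β γ)

end Decomposition

/-- `ρ` is the law of the summands not yet split off and `c` bounds their sum; carrying them along
keeps the threshold `x` of the two-large-summands term fixed throughout the induction. -/
lemma prod_nconv_sum_gt_le (α H : Measure ℝ) [IsProbabilityMeasure α] [IsProbabilityMeasure H]
    (hα : α (Iio 0) = 0) (hαH : TailLE α H) {t : ℝ} (ht : 0 ≤ t) (x : ℝ) (k : ℕ)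
    (ρ : Measure ℝ) [IsProbabilityMeasure ρ] (hρ : TailLE (nconv α (k + 1) ∗ ρ) H)
    {c : ℝ} (hc : 0 ≤ c) :
    ((nconv α (k + 1)).prod ρ).real {p | x < p.1 + p.2 ∧ p.2 ≤ c}
      ≤ (k + 1) * tail α (x - c - k * t) + k * (H.prod H).real (bothLargeSet t t x) := by
  induction k generalizing ρ c with
  | zero =>
    have hsub : {p : ℝ × ℝ | x < p.1 + p.2 ∧ p.2 ≤ c} ⊆ Ioi (x - c) ×ˢ univ :=
      fun p ⟨h₁, h₂⟩ => ⟨by simp only [mem_Ioi]; linarith, trivial⟩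
    calc _ ≤ ((nconv α 1).prod ρ).real (Ioi (x - c) ×ˢ univ) := measureReal_mono hsub
      _ = _ := by rw [measureReal_prod_prod, probReal_univ, nconv_one]; simp; rfl
  | succ k ih =>
    set A := nconv α (k + 1)
    set P := (A.prod α).prod ρ
    have hcover :
        (fun q : (ℝ × ℝ) × ℝ => (q.1.1 + q.1.2, q.2)) ⁻¹' {p | x < p.1 + p.2 ∧ p.2 ≤ c}
        ⊆ (fun q : (ℝ × ℝ) × ℝ => (q.1.1, q.1.2 + q.2)) ⁻¹' {p | x < p.1 + p.2 ∧ p.2 ≤ c + t}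
          ∪ (fun q : (ℝ × ℝ) × ℝ => (q.1.1 + q.2, q.1.2)) ⁻¹' bothLargeSet t t x
          ∪ (fun q : (ℝ × ℝ) × ℝ => q.1.2) ⁻¹' Ioi (x - t) := by
      rintro ⟨⟨a, b⟩, r⟩ ⟨hsum, hr⟩
      simp only [mem_union, mem_preimage, mem_ofPred_eq, bothLargeSet, mem_Ioi] at hsum hr ⊢
      by_cases hb : b ≤ t
      · exact Or.inl (Or.inl ⟨by linarith, by linarith⟩)
      by_cases har : t < a + r
      · exact Or.inl (Or.inr ⟨har, not_le.1 hb, by linarith⟩)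
      · exact Or.inr (by linarith)
    have hsplit := measureReal_le_add_add_of_subset (μ := P) hcover
    rw [(measurePreserving_add₁₂ A α ρ).measureReal_preimage (by measurability),
      (measurePreserving_add₂₃ A α ρ).measureReal_preimage (by measurability),
      (measurePreserving_add₁₃ A α ρ).measureReal_preimage
        (measurableSet_bothLargeSet t t x).nullMeasurableSet] at hsplit
    have hrest := ih (α ∗ ρ) (by rwa [← Measure.conv_assoc]) (c := c + t) (by positivity)
    rw [show x - (c + t) - k * t = x - c - (k + 1) * t by ring] at hrest
    have hAρ : TailLE (A ∗ ρ) H := by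
      refine (tailLE_conv_right (A ∗ ρ) hα).trans ?_
      rwa [Measure.conv_assoc, Measure.conv_comm ρ, ← Measure.conv_assoc]
    have hboth :
        ((A ∗ ρ).prod α).real (bothLargeSet t t x) ≤ (H.prod H).real (bothLargeSet t t x) :=
      ENNReal.toReal_mono (measure_ne_top _ _) (prod_bothLargeSet_le_of_tailLE hAρ hαH t t x)
    have hsingle :
        P.real ((fun q : (ℝ × ℝ) × ℝ => q.1.2) ⁻¹' Ioi (x - t)) = tail α (x - t) := by
      have hbox : (fun q : (ℝ × ℝ) × ℝ => q.1.2) ⁻¹' Ioi (x - t)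
          = (univ ×ˢ Ioi (x - t)) ×ˢ univ := by
        ext q; simp
      rw [hbox, measureReal_prod_prod, measureReal_prod_prod, probReal_univ, probReal_univ]
      simp only [one_mul, mul_one]
      rfl
    have hmono : tail α (x - t) ≤ tail α (x - c - (k + 1) * t) :=
      tail_antitone α (by nlinarith [(Nat.cast_nonneg k : (0 : ℝ) ≤ k)])
    rw [hsingle] at hsplit
    rw [nconv_succ]
    push_cast
    linarith

lemma tail_nconv_le (μ : Measure ℝ) [IsProbabilityMeasure μ] (hnn : μ (Iio 0) = 0) (k : ℕ)
    {t : ℝ} (ht : 0 ≤ t) (x : ℝ) :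
    tail (nconv μ (k + 1)) x ≤ (k + 1) * tail μ (x - k * t)
      + k * ((nconv μ (k + 1)).prod (nconv μ (k + 1))).real (bothLargeSet t t x) := by
  have h := prod_nconv_sum_gt_le μ (nconv μ (k + 1)) hnn (tailLE_nconv μ hnn k.succ_pos) ht x
    k (Measure.dirac 0) (by rw [Measure.conv_dirac_zero]; exact TailLE.refl _) le_rfl
  have hδ : ((nconv μ (k + 1)).prod (Measure.dirac 0)).real
      {p : ℝ × ℝ | x < p.1 + p.2 ∧ p.2 ≤ 0} = tail (nconv μ (k + 1)) x := by
    rw [Measure.prod_dirac, map_measureReal_apply (by fun_prop) (by measurability)]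
    congr 1
    ext a; simp
  rwa [hδ, sub_zero] at h

lemma exists_mul_tail_nconv_le_tail (μ : Measure ℝ) [IsProbabilityMeasure μ]
    (hnn : μ (Iio 0) = 0) (htail : ∀ x, 0 < tail μ x) {n : ℕ} (hn : 1 ≤ n)
    (hJ : MemJ (nconv μ n)) : ∃ c > 0, ∀ᶠ x in atTop, c * tail (nconv μ n) x ≤ tail μ x := by
  obtain ⟨k, rfl⟩ : ∃ k, n = k + 1 := ⟨n - 1, by omega⟩
  set H := nconv μ (k + 1)
  have htailH : ∀ x, 0 < tail H x := fun x =>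
    (htail x).trans_le ((tailLE_nconv μ hnn hn).tail_le x)
  obtain ⟨C, hC, hCx⟩ := hJ.tail2_le_mul_tail htailH
  have hη : 0 < 1 / (2 * (k + 1) * C) := by positivity
  obtain ⟨t₀, ht₀⟩ := hJ.exists_bothLargeSet_le htailH hη
  set t := max t₀ 0
  obtain ⟨D, hD, hDx⟩ := hJ.tail_sub_le htailH (k * t)
  have hsplit : ∀ᶠ x in atTop, tail H x ≤ 2 * (k + 1) * tail μ (x - k * t) := by
    filter_upwards [hCx, ht₀] with x hC₁ ht₁
    have hM : k * (H.prod H).real (bothLargeSet t t x) ≤ tail H x / 2 :=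
      calc k * (H.prod H).real (bothLargeSet t t x)
          ≤ k * (1 / (2 * (k + 1) * C) * (C * tail H x)) := by
            gcongr
            exact (ht₁ t t (le_max_left t₀ 0) (le_max_left t₀ 0)).trans (by gcongr)
        _ = k / (k + 1) * (tail H x / 2) := by field_simp
        _ ≤ tail H x / 2 :=
            mul_le_of_le_one_left (by linarith [htailH x])
              (div_le_one_of_le₀ (by linarith) (by positivity))
    linarith [tail_nconv_le μ hnn k (le_max_right t₀ 0) x]
  refine ⟨1 / (2 * (k + 1) * D), by positivity, ?_⟩
  filter_upwards
    [(tendsto_atTop_add_const_right _ (k * t) tendsto_id).eventually (hsplit.and hDx)]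
    with x ⟨h₁, h₂⟩
  simp only [id, add_sub_cancel_right] at h₁ h₂
  rw [div_mul_eq_mul_div, one_mul, div_le_iff₀ (by positivity)]
  calc tail H x ≤ D * tail H (x + k * t) := h₂
    _ ≤ D * (2 * (k + 1) * tail μ x) := mul_le_mul_of_nonneg_left h₁ hD.le
    _ = tail μ x * (2 * (k + 1) * D) := by ring

lemma memJ_of_memJ_nconv (μ : Measure ℝ) [IsProbabilityMeasure μ] (hnn : μ (Iio 0) = 0)
    (htail : ∀ x, 0 < tail μ x) {n : ℕ} (hn : 1 ≤ n) (hJ : MemJ (nconv μ n)) : MemJ μ := by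
  set H := nconv μ n
  have hμH := tailLE_nconv μ hnn hn
  have htailH : ∀ x, 0 < tail H x := fun x => (htail x).trans_le (hμH.tail_le x)
  obtain ⟨c, hc, hcx⟩ := exists_mul_tail_nconv_le_tail μ hnn htail hn hJ
  obtain ⟨C, hC, hCx⟩ := hJ.tail2_le_mul_tail htailH
  obtain ⟨C', hC', hcompare⟩ : ∃ C' > 0, ∀ᶠ x in atTop, tail2 H x ≤ C' * tail2 μ x := by
    refine ⟨C / c, by positivity, ?_⟩
    filter_upwards [hcx, hCx] with x h₁ h₂
    have h₃ := tail_le_tail2 μ hnn x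
    rw [div_mul_eq_mul_div, le_div_iff₀ hc]
    nlinarith
  refine (memJ_iff (tail2_pos μ htail)).2 fun ε hε => ?_
  obtain ⟨t₀, ht₀⟩ := hJ.exists_bothLargeSet_le htailH (ε := ε / (2 * C')) (by positivity)
  filter_upwards [eventually_ge_atTop t₀] with K hK
  filter_upwards [ht₀, hcompare, eventually_ge_atTop (2 * t₀)] with x h₁ h₂ hx
  have hcover : noBigJumpSet K x ⊆ bothLargeSet (x / 2) K x ∪ bothLargeSet K (x / 2) x := by
    rintro ⟨a, b⟩ ⟨hab, ha, hb⟩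
    by_cases ha' : x / 2 < a
    · exact Or.inl ⟨ha', by linarith, hab⟩
    · exact Or.inr ⟨by linarith, by linarith, hab⟩
  have hdom : ∀ s u,
      (μ.prod μ).real (bothLargeSet s u x) ≤ (H.prod H).real (bothLargeSet s u x) := fun s u =>
    ENNReal.toReal_mono (measure_ne_top _ _) (prod_bothLargeSet_le_of_tailLE hμH hμH s u x)
  calc (μ.prod μ).real (noBigJumpSet K x)
      ≤ (μ.prod μ).real (bothLargeSet (x / 2) K x)
        + (μ.prod μ).real (bothLargeSet K (x / 2) x) :=
        (measureReal_mono hcover).trans (measureReal_union_le _ _)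
    _ ≤ ε / (2 * C') * tail2 H x + ε / (2 * C') * tail2 H x :=
        add_le_add ((hdom _ _).trans (h₁ _ _ (by linarith) hK))
          ((hdom _ _).trans (h₁ _ _ hK (by linarith)))
    _ = ε / C' * tail2 H x := by ring
    _ ≤ ε / C' * (C' * tail2 μ x) := by gcongr
    _ = ε * tail2 μ x := by field_simp

theorem stmt13 (μ : Measure ℝ) [IsProbabilityMeasure μ]
    (hnn : μ (Set.Iio 0) = 0) (hub : ∀ x : ℝ, 0 < μ (Set.Ioi x))
    (n : ℕ) (hn : 2 ≤ n) (hJ : MemJ (nconv μ n)) :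
    WeakTailEquiv μ (nconv μ n) ∧ MemJ μ := by
  have htail : ∀ x, 0 < tail μ x := fun x => ENNReal.toReal_pos (hub x).ne' (measure_ne_top _ _)
  have hn₁ : 1 ≤ n := by omega
  refine ⟨⟨exists_mul_tail_nconv_le_tail μ hnn htail hn₁ hJ, 1, ?_⟩,
    memJ_of_memJ_nconv μ hnn htail hn₁ hJ⟩
  exact Eventually.of_forall fun x => by simpa using (tailLE_nconv μ hnn hn₁).tail_le x
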